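/- For every integer n ≥ 4 and every t ∈ [0,1], the function g_n(t) = 4/(4n−1)² + (1/(4n−1))·(1 − (2t−1)^{2n−2}) − (1−t)·t^{2n−2} satisfies g_n(t) > 0. -/
import Mathlib

private lemma pow_sq_lt (m : ℕ) (hm : 6 ≤ m) : (2*(m:ℝ)+3)^2 < 4 * 2^m := by
  induction m, hm using Nat.le_induction with
  | base => norm_num
  | succ k hk ih =>
    have hk6 : (6:ℝ) ≤ (k:ℝ) := by exact_mod_cast hk
    push_cast
    have h1 : (2*((k:ℝ)+1)+3)^2 < 2*(2*(k:ℝ)+3)^2 := by nlinarith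
    have h2 : (4:ℝ) * 2^(k+1) = 2*(4*2^k) := by ring
    rw [h2]
    calc (2*((k:ℝ)+1)+3)^2 < 2*(2*(k:ℝ)+3)^2 := h1
      _ < 2*(4*2^k) := by linarith

private lemma cast_mul_sub_one_nonneg (k : ℕ) : (0:ℝ) ≤ (k:ℝ)*((k:ℝ)-1) := by
  rcases Nat.eq_zero_or_pos k with h | h
  · simp [h]
  · have : (1:ℝ) ≤ (k:ℝ) := by exact_mod_cast h
    nlinarith

private lemma binom2 (m : ℕ) (u : ℝ) (hu : 0 ≤ u) :
    1 + (m:ℝ)*u + (m:ℝ)*((m:ℝ)-1)/2*u^2 ≤ (1+u)^m := by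
  induction m with
  | zero => norm_num
  | succ k ih =>
    have h1 : (1+u)^(k+1) = (1+u)^k * (1+u) := by ring
    have h2 : (1 + (k:ℝ)*u + (k:ℝ)*((k:ℝ)-1)/2*u^2) * (1+u) ≤ (1+u)^k * (1+u) :=
      mul_le_mul_of_nonneg_right ih (by linarith)
    have h3 : 0 ≤ (k:ℝ)*((k:ℝ)-1)/2 * u^3 := by
      have := cast_mul_sub_one_nonneg k
      positivity
    push_cast
    nlinarith [h1, h2, h3]

private lemma bern2 (m : ℕ) (u : ℝ) (hu : 0 ≤ u) (hu1 : u ≤ 1) :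
    (1 + (m:ℝ)*u + (m:ℝ)*((m:ℝ)-1)/2*u^2) * (1-u)^m ≤ 1 := by
  have h1 : (0:ℝ) ≤ 1 - u := by linarith
  have h2 : (1-u)^m * (1+u)^m = (1-u^2)^m := by
    rw [← mul_pow]; ring_nf
  have h3 : (1-u^2)^m ≤ 1 := pow_le_one₀ (by nlinarith) (by nlinarith)
  calc (1 + (m:ℝ)*u + (m:ℝ)*((m:ℝ)-1)/2*u^2) * (1-u)^m
      ≤ (1+u)^m * (1-u)^m :=
        mul_le_mul_of_nonneg_right (binom2 m u hu) (pow_nonneg h1 m)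
    _ = (1-u^2)^m := by rw [mul_comm]; exact h2
    _ ≤ 1 := h3

private lemma keyF (M u : ℝ) (hM : 6 ≤ M) (hu : 0 ≤ u) (hu2 : u ≤ 1/2) :
    0 < 4*(1+M*u+M*(M-1)/2*u^2)^2 + (2*M+3)*((1+M*u+M*(M-1)/2*u^2)^2-1)
      - (2*M+3)^2*u*(1+M*u+M*(M-1)/2*u^2) := by
  nlinarith [sq_nonneg (M*u), sq_nonneg (M*u^2), sq_nonneg u, sq_nonneg (M*u-1),
    sq_nonneg (M*u^2 - u), mul_nonneg hu (sub_nonneg.2 hM), sq_nonneg (M*u*(M*u-2)),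
    mul_nonneg (mul_nonneg hu hu) (sub_nonneg.2 hM), sq_nonneg (M*u^2*(M-1)),
    mul_nonneg (sub_nonneg.2 hM) (sq_nonneg (M*u-1))]

/-- step 2: from the key inequality and `z*D ≤ 1`, get positivity of the quadratic in `z`. -/
private lemma keyG (M u z D : ℝ) (hM : 6 ≤ M) (hu : 0 ≤ u) (hu2 : u ≤ 1/2)
    (hz : 0 ≤ z) (hD : 1 ≤ D) (hzD : z * D ≤ 1)
    (hD' : D = 1 + M*u + M*(M-1)/2*u^2) :
    0 < 4 + (2*M+3)*(1-z^2) - (2*M+3)^2*(u*z) := by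
  have hF := keyF M u hM hu hu2
  rw [← hD'] at hF
  have ha : 0 ≤ 1 - z*D := by linarith
  have hb : 0 ≤ 1 + z*D := by nlinarith
  have h1 : 0 ≤ (2*M+3)*((1 - z*D)*(1 + z*D)) := by
    have hE : (0:ℝ) < 2*M+3 := by linarith
    positivity
  have h2 : 0 ≤ (2*M+3)^2*(u*D*(1 - z*D)) := by
    have hD0 : (0:ℝ) ≤ D := by linarith
    positivity
  have hGD : 0 < (4 + (2*M+3)*(1-z^2) - (2*M+3)^2*(u*z)) * D^2 := by
    nlinarith [hF, h1, h2]
  have hD2 : (0:ℝ) < D^2 := by positivity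
  nlinarith [hGD, hD2]

/-- `g_n(t) = 4/(4n-1)² + (1 - (2t-1)^{2n-2})/(4n-1) - (1-t)·t^{2n-2}`. -/
noncomputable def gFun (n : ℕ) (t : ℝ) : ℝ :=
  4 / (4 * (n : ℝ) - 1) ^ 2 + (1 - (2 * t - 1) ^ (2 * n - 2)) / (4 * (n : ℝ) - 1)
    - (1 - t) * t ^ (2 * n - 2)

/-- For every integer `n ≥ 4` and every `t ∈ [0,1]`, `g_n(t) > 0`. -/
theorem gFun_pos (n : ℕ) (hn : 4 ≤ n) (t : ℝ) (ht : t ∈ Set.Icc (0 : ℝ) 1) :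
    0 < gFun n t := by
  obtain ⟨ht0, ht1⟩ := ht
  have hm6 : 6 ≤ 2*n - 2 := by omega
  set m : ℕ := 2*n - 2 with hm
  have hM6 : (6:ℝ) ≤ (m:ℝ) := by exact_mod_cast hm6
  have hMn : 4*(n:ℝ) - 1 = 2*(m:ℝ) + 3 := by
    have h : (m:ℝ) = 2*(n:ℝ) - 2 := by
      rw [hm]; push_cast [Nat.cast_sub (by omega : 2 ≤ 2*n)]; ring
    rw [h]; ring
  have hE : (0:ℝ) < 2*(m:ℝ) + 3 := by linarith
  have hgoal : gFun n t
      = 4/(2*(m:ℝ)+3)^2 + (1 - (2*t-1)^m)/(2*(m:ℝ)+3) - (1-t)*t^m := by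
    rw [gFun, hMn]
  rw [hgoal]
  rcases le_or_gt t (1/2) with hth | hth
  · -- t ≤ 1/2
    have hs1 : (2*t-1)^m ≤ 1 := by
      calc (2*t-1)^m ≤ |(2*t-1)^m| := le_abs_self _
        _ = |2*t-1|^m := by rw [abs_pow]
        _ ≤ 1 := pow_le_one₀ (abs_nonneg _) (by rw [abs_le]; constructor <;> linarith)
    have hB : 0 ≤ (1 - (2*t-1)^m)/(2*(m:ℝ)+3) := div_nonneg (by linarith) hE.le
    have hC : (1-t)*t^m ≤ (1/2:ℝ)^m := by
      calc (1-t)*t^m ≤ 1 * t^m :=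
            mul_le_mul_of_nonneg_right (by linarith) (pow_nonneg ht0 m)
        _ = t^m := one_mul _
        _ ≤ (1/2:ℝ)^m := pow_le_pow_left₀ ht0 hth m
    have hA : (1/2:ℝ)^m < 4/(2*(m:ℝ)+3)^2 := by
      have h2 : (0:ℝ) < 2^m := by positivity
      have hE2 : (0:ℝ) < (2*(m:ℝ)+3)^2 := by positivity
      have heq : (1/2:ℝ)^m = 1/2^m := by rw [div_pow, one_pow]
      rw [heq, div_lt_div_iff₀ h2 hE2, one_mul]
      nlinarith [pow_sq_lt m hm6]
    linarith
  · -- t > 1/2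
    have hu0 : (0:ℝ) ≤ 1 - t := by linarith
    have hu2 : (1:ℝ) - t ≤ 1/2 := by linarith
    have hz0 : (0:ℝ) ≤ t^m := pow_nonneg ht0 m
    have hD1 : (1:ℝ) ≤ 1 + (m:ℝ)*(1-t) + (m:ℝ)*((m:ℝ)-1)/2*(1-t)^2 := by
      have a1 : (0:ℝ) ≤ (m:ℝ)*(1-t) := mul_nonneg (by linarith) hu0
      have a2 : (0:ℝ) ≤ (m:ℝ)*((m:ℝ)-1)/2*(1-t)^2 := by
        have := cast_mul_sub_one_nonneg m
        positivity
      linarith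
    have hDz : t^m * (1 + (m:ℝ)*(1-t) + (m:ℝ)*((m:ℝ)-1)/2*(1-t)^2) ≤ 1 := by
      have hb := bern2 m (1-t) hu0 (by linarith)
      have ht' : (1:ℝ) - (1-t) = t := by ring
      rw [ht'] at hb
      linarith [hb]
    have hw : (2*t-1)^m ≤ (t^m)^2 := by
      have h1 : 0 ≤ 2*t - 1 := by linarith
      have h2 : 2*t - 1 ≤ t^2 := by nlinarith [sq_nonneg (t-1)]
      calc (2*t-1)^m ≤ (t^2)^m := pow_le_pow_left₀ h1 h2 m
        _ = (t^m)^2 := by rw [← pow_mul, mul_comm, pow_mul]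
    have hG := keyG (m:ℝ) (1-t) (t^m) (1 + (m:ℝ)*(1-t) + (m:ℝ)*((m:ℝ)-1)/2*(1-t)^2)
      hM6 hu0 hu2 hz0 hD1 (by rw [mul_comm] at hDz ⊢; exact hDz) rfl
    have hmain : 0 < 4/(2*(m:ℝ)+3)^2 + (1-(t^m)^2)/(2*(m:ℝ)+3) - (1-t)*t^m := by
      have heq : 4/(2*(m:ℝ)+3)^2 + (1-(t^m)^2)/(2*(m:ℝ)+3) - (1-t)*t^m
          = (4 + (2*(m:ℝ)+3)*(1-(t^m)^2) - (2*(m:ℝ)+3)^2*((1-t)*t^m))/(2*(m:ℝ)+3)^2 := by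
        field_simp
      rw [heq]
      exact div_pos hG (by positivity)
    have hle : (1-(t^m)^2)/(2*(m:ℝ)+3) ≤ (1 - (2*t-1)^m)/(2*(m:ℝ)+3) := by
      gcongr <;> linarith
    linarith
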